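/- arXiv:1608.08850 — 2 statements merged into one kernel-verified Lean document; each statement's English description precedes it below -/
import Mathlib

section
/- Let v and p be smooth compactly supported solutions of the steady Euler momentum equations. Then for every affine plane L ⊂ ℝ³ with unit normal ν_L, ∫_L (p + ⟨v, ν_L⟩²) dσ_L = 0. -/
open MeasureTheory Matrix

/-- Partial derivative of a scalar function on `ℝ³` in the `i`-th coordinate direction. -/
noncomputable def pd (f : (Fin 3 → ℝ) → ℝ) (i : Fin 3) (x : Fin 3 → ℝ) : ℝ :=
  fderiv ℝ f x (Pi.single i 1)

/-- Euclidean dot product on `ℝ³`. -/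
def dot3 (a b : Fin 3 → ℝ) : ℝ := ∑ i, a i * b i

section Aux

abbrev E3 := Fin 3 → ℝ

/-- The "momentum flux" scalar field in direction `d`. -/
noncomputable def Wf (v : E3 → E3) (p : E3 → ℝ) (ν d : E3) : E3 → ℝ :=
  fun x => dot3 (v x) ν * dot3 (v x) d + p x * dot3 ν d

lemma fderiv_eval (g : E3 → ℝ) (x u : E3) :
    fderiv ℝ g x u = u 0 * pd g 0 x + u 1 * pd g 1 x + u 2 * pd g 2 x := by
  have hu : u = u 0 • (Pi.single 0 1 : E3) + u 1 • (Pi.single 1 1 : E3)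
      + u 2 • (Pi.single 2 1 : E3) := by
    funext j; fin_cases j <;> simp
  conv_lhs => rw [hu]
  simp [pd, smul_eq_mul]

lemma pd_mul (g h : E3 → ℝ) (x : E3) (k : Fin 3) (hg : DifferentiableAt ℝ g x)
    (hh : DifferentiableAt ℝ h x) :
    pd (fun y => g y * h y) k x = pd g k x * h x + g x * pd h k x := by
  unfold pd
  rw [fderiv_fun_mul hg hh]
  simp [smul_eq_mul]
  ring

lemma comp_rel (e f ν : E3)
    (hν : dot3 ν ν = 1) (he : dot3 e e = 1) (hf : dot3 f f = 1)
    (hef : dot3 e f = 0) (heν : dot3 e ν = 0) (hfν : dot3 f ν = 0) :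
    ∀ k i : Fin 3, e k * e i + f k * f i + ν k * ν i = if k = i then 1 else 0 := by
  simp only [dot3, Fin.sum_univ_three] at hν he hf hef heν hfν
  have hM : (Matrix.of ![e, f, ν]) * (Matrix.of ![e, f, ν])ᵀ = 1 := by
    ext i j
    fin_cases i <;> fin_cases j <;>
      simp [Matrix.mul_apply, Matrix.transpose_apply, Matrix.vecHead, Matrix.vecTail,
        Fin.sum_univ_three, Matrix.one_apply] <;>
      first
        | linear_combination he | linear_combination hf | linear_combination hν
        | linear_combination hef | linear_combination heν | linear_combination hfν
  have hMt := mul_eq_one_comm.mp hM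
  intro k i
  have h2 : ((Matrix.of ![e, f, ν])ᵀ * Matrix.of ![e, f, ν]) k i
      = (1 : Matrix (Fin 3) (Fin 3) ℝ) k i := by rw [hMt]
  simpa [Matrix.mul_apply, Matrix.transpose_apply, Matrix.vecHead, Matrix.vecTail,
    Fin.sum_univ_three, Matrix.one_apply] using h2

noncomputable def Lmap (e f ν : E3) : E3 →L[ℝ] E3 :=
  ((ContinuousLinearMap.proj 0 : E3 →L[ℝ] ℝ).smulRight e) +
  ((ContinuousLinearMap.proj 1 : E3 →L[ℝ] ℝ).smulRight f) +
  ((ContinuousLinearMap.proj 2 : E3 →L[ℝ] ℝ).smulRight ν)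

lemma Lmap_apply (e f ν : E3) (y : E3) :
    Lmap e f ν y = y 0 • e + y 1 • f + y 2 • ν := by
  simp [Lmap]

noncomputable def dotCLM (u : E3) : E3 →L[ℝ] ℝ :=
  u 0 • (ContinuousLinearMap.proj 0 : E3 →L[ℝ] ℝ) +
  u 1 • (ContinuousLinearMap.proj 1 : E3 →L[ℝ] ℝ) +
  u 2 • (ContinuousLinearMap.proj 2 : E3 →L[ℝ] ℝ)

lemma dotCLM_apply (u x : E3) : dotCLM u x = u 0 * x 0 + u 1 * x 1 + u 2 * x 2 := by
  simp [dotCLM]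

noncomputable def iotaHomeo (x₀ e f ν : E3)
    (hν : dot3 ν ν = 1) (he : dot3 e e = 1) (hf : dot3 f f = 1)
    (hef : dot3 e f = 0) (heν : dot3 e ν = 0) (hfν : dot3 f ν = 0) : E3 ≃ₜ E3 where
  toFun := fun y => x₀ + Lmap e f ν y
  invFun := fun x => (ContinuousLinearMap.pi
      (fun i => dotCLM (![e, f, ν] i))) (x - x₀)
  left_inv := by
    intro y
    simp only [dot3, Fin.sum_univ_three] at hν he hf hef heν hfν
    funext i
    simp only [ContinuousLinearMap.pi_apply, Lmap_apply]
    fin_cases i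
    · simp [dotCLM_apply]
      linear_combination y 0 * he + y 1 * hef + y 2 * heν
    · simp [dotCLM_apply]
      linear_combination y 0 * hef + y 1 * hf + y 2 * hfν
    · simp [dotCLM_apply]
      linear_combination y 0 * heν + y 1 * hfν + y 2 * hν
  right_inv := by
    intro x
    have hcomp := comp_rel e f ν hν he hf hef heν hfν
    have c00 : e 0 * e 0 + f 0 * f 0 + ν 0 * ν 0 = 1 := by simpa using hcomp 0 0
    have c01 : e 0 * e 1 + f 0 * f 1 + ν 0 * ν 1 = 0 := by simpa using hcomp 0 1
    have c02 : e 0 * e 2 + f 0 * f 2 + ν 0 * ν 2 = 0 := by simpa using hcomp 0 2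
    have c10 : e 1 * e 0 + f 1 * f 0 + ν 1 * ν 0 = 0 := by simpa using hcomp 1 0
    have c11 : e 1 * e 1 + f 1 * f 1 + ν 1 * ν 1 = 1 := by simpa using hcomp 1 1
    have c12 : e 1 * e 2 + f 1 * f 2 + ν 1 * ν 2 = 0 := by simpa using hcomp 1 2
    have c20 : e 2 * e 0 + f 2 * f 0 + ν 2 * ν 0 = 0 := by simpa using hcomp 2 0
    have c21 : e 2 * e 1 + f 2 * f 1 + ν 2 * ν 1 = 0 := by simpa using hcomp 2 1
    have c22 : e 2 * e 2 + f 2 * f 2 + ν 2 * ν 2 = 1 := by simpa using hcomp 2 2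
    funext i
    simp only [Lmap_apply, ContinuousLinearMap.pi_apply, Pi.add_apply, Pi.smul_apply,
      smul_eq_mul, Pi.sub_apply]
    fin_cases i
    · simp [dotCLM_apply]
      linear_combination (x 0 - x₀ 0) * c00 + (x 1 - x₀ 1) * c10 + (x 2 - x₀ 2) * c20
    · simp [dotCLM_apply]
      linear_combination (x 0 - x₀ 0) * c01 + (x 1 - x₀ 1) * c11 + (x 2 - x₀ 2) * c21
    · simp [dotCLM_apply]
      linear_combination (x 0 - x₀ 0) * c02 + (x 1 - x₀ 1) * c12 + (x 2 - x₀ 2) * c22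
  continuous_toFun := continuous_const.add (Lmap e f ν).continuous
  continuous_invFun :=
    (ContinuousLinearMap.pi (fun i => dotCLM (![e, f, ν] i))).continuous.comp
      (continuous_id.sub continuous_const)

lemma Wf_contDiff (v : E3 → E3) (p : E3 → ℝ) (hv : ContDiff ℝ (⊤ : ℕ∞) v) (hp : ContDiff ℝ (⊤ : ℕ∞) p)
    (ν d : E3) : ContDiff ℝ (⊤ : ℕ∞) (Wf v p ν d) := by
  have hvi : ∀ i : Fin 3, ContDiff ℝ (⊤ : ℕ∞) (fun y => v y i) := fun i =>
    (ContinuousLinearMap.proj (R := ℝ) (φ := fun _ : Fin 3 => ℝ) i).contDiff.comp hv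
  have hdot : ∀ u : E3, ContDiff ℝ (⊤ : ℕ∞) (fun y => dot3 (v y) u) := by
    intro u
    have hfun : (fun y => dot3 (v y) u)
        = fun y => v y 0 * u 0 + v y 1 * u 1 + v y 2 * u 2 := by
      funext y; simp [dot3, Fin.sum_univ_three]
    rw [hfun]
    exact (((hvi 0).mul contDiff_const).add ((hvi 1).mul contDiff_const)).add
      ((hvi 2).mul contDiff_const)
  exact ((hdot ν).mul (hdot d)).add (hp.mul contDiff_const)

lemma Wf_support (v : E3 → E3) (p : E3 → ℝ) (hvs : HasCompactSupport v)
    (hps : HasCompactSupport p) (ν d : E3) : HasCompactSupport (Wf v p ν d) := by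
  have h1 : HasCompactSupport (fun x => dot3 (v x) ν) :=
    hvs.comp_left (g := fun w => dot3 w ν) (by simp [dot3])
  exact (h1.mul_right).add (hps.mul_right)

lemma key (v : E3 → E3) (p : E3 → ℝ) (hv : ContDiff ℝ (⊤ : ℕ∞) v) (hp : ContDiff ℝ (⊤ : ℕ∞) p)
    (euler : ∀ (x : Fin 3 → ℝ) (i : Fin 3),
      (∑ j : Fin 3, pd (fun y => v y i * v y j) j x) + pd p i x = 0)
    (e f ν : E3)
    (comp : ∀ k i : Fin 3, e k * e i + f k * f i + ν k * ν i = if k = i then 1 else 0)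
    (x : E3) :
    fderiv ℝ (Wf v p ν e) x e + fderiv ℝ (Wf v p ν f) x f
      + fderiv ℝ (Wf v p ν ν) x ν = 0 := by
  have hvi : ∀ i : Fin 3, Differentiable ℝ (fun y => v y i) := fun i =>
    (ContinuousLinearMap.proj (R := ℝ) (φ := fun _ : Fin 3 => ℝ) i).differentiable.comp
      (hv.differentiable (by simp))
  have hpd : Differentiable ℝ p := hp.differentiable (by simp)
  have hdotHas : ∀ d : E3, HasFDerivAt (fun y => dot3 (v y) d)
      (d 0 • fderiv ℝ (fun y => v y 0) x + d 1 • fderiv ℝ (fun y => v y 1) x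
        + d 2 • fderiv ℝ (fun y => v y 2) x) x := by
    intro d
    have hfun : (fun y => dot3 (v y) d)
        = fun y => v y 0 * d 0 + v y 1 * d 1 + v y 2 * d 2 := by
      funext y; simp [dot3, Fin.sum_univ_three]
    rw [hfun]
    have h := ((((hvi 0) x).hasFDerivAt.mul_const (d 0)).add
        (((hvi 1) x).hasFDerivAt.mul_const (d 1))).add
        (((hvi 2) x).hasFDerivAt.mul_const (d 2))
    exact h
  have hWHas : ∀ d : E3, HasFDerivAt (Wf v p ν d)
      ((dot3 (v x) ν • (d 0 • fderiv ℝ (fun y => v y 0) x + d 1 • fderiv ℝ (fun y => v y 1) x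
          + d 2 • fderiv ℝ (fun y => v y 2) x)
        + dot3 (v x) d • (ν 0 • fderiv ℝ (fun y => v y 0) x + ν 1 • fderiv ℝ (fun y => v y 1) x
          + ν 2 • fderiv ℝ (fun y => v y 2) x))
        + dot3 ν d • fderiv ℝ p x) x := fun d =>
    ((hdotHas ν).mul (hdotHas d)).add ((hpd x).hasFDerivAt.mul_const (dot3 ν d))
  have hWval : ∀ d : E3, fderiv ℝ (Wf v p ν d) x d =
      dot3 (v x) ν * (d 0 * (fderiv ℝ (fun y => v y 0) x d) + d 1 * (fderiv ℝ (fun y => v y 1) x d)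
          + d 2 * (fderiv ℝ (fun y => v y 2) x d))
        + dot3 (v x) d * (ν 0 * (fderiv ℝ (fun y => v y 0) x d) + ν 1 * (fderiv ℝ (fun y => v y 1) x d)
          + ν 2 * (fderiv ℝ (fun y => v y 2) x d))
        + dot3 ν d * fderiv ℝ p x d := by
    intro d
    rw [(hWHas d).fderiv]
    simp [smul_eq_mul]
    ring
  have E : ∀ i : Fin 3,
      (pd (fun y => v y i) 0 x * v x 0 + v x i * pd (fun y => v y 0) 0 x)
      + (pd (fun y => v y i) 1 x * v x 1 + v x i * pd (fun y => v y 1) 1 x)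
      + (pd (fun y => v y i) 2 x * v x 2 + v x i * pd (fun y => v y 2) 2 x)
      + pd p i x = 0 := by
    intro i
    have h := euler x i
    rw [Fin.sum_univ_three] at h
    rw [pd_mul _ _ _ _ ((hvi i) x) ((hvi 0) x)] at h
    rw [pd_mul _ _ _ _ ((hvi i) x) ((hvi 1) x)] at h
    rw [pd_mul _ _ _ _ ((hvi i) x) ((hvi 2) x)] at h
    linarith
  have c00 : e 0 * e 0 + f 0 * f 0 + ν 0 * ν 0 = 1 := by simpa using comp 0 0
  have c01 : e 0 * e 1 + f 0 * f 1 + ν 0 * ν 1 = 0 := by simpa using comp 0 1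
  have c02 : e 0 * e 2 + f 0 * f 2 + ν 0 * ν 2 = 0 := by simpa using comp 0 2
  have c10 : e 1 * e 0 + f 1 * f 0 + ν 1 * ν 0 = 0 := by simpa using comp 1 0
  have c11 : e 1 * e 1 + f 1 * f 1 + ν 1 * ν 1 = 1 := by simpa using comp 1 1
  have c12 : e 1 * e 2 + f 1 * f 2 + ν 1 * ν 2 = 0 := by simpa using comp 1 2
  have c20 : e 2 * e 0 + f 2 * f 0 + ν 2 * ν 0 = 0 := by simpa using comp 2 0
  have c21 : e 2 * e 1 + f 2 * f 1 + ν 2 * ν 1 = 0 := by simpa using comp 2 1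
  have c22 : e 2 * e 2 + f 2 * f 2 + ν 2 * ν 2 = 1 := by simpa using comp 2 2
  rw [hWval e, hWval f, hWval ν]
  rw [fderiv_eval (fun y => v y 0) x e, fderiv_eval (fun y => v y 1) x e,
      fderiv_eval (fun y => v y 2) x e, fderiv_eval p x e,
      fderiv_eval (fun y => v y 0) x f, fderiv_eval (fun y => v y 1) x f,
      fderiv_eval (fun y => v y 2) x f, fderiv_eval p x f,
      fderiv_eval (fun y => v y 0) x ν, fderiv_eval (fun y => v y 1) x ν,
      fderiv_eval (fun y => v y 2) x ν, fderiv_eval p x ν]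
  simp only [dot3, Fin.sum_univ_three]
  have E0 := E 0; have E1 := E 1; have E2 := E 2
  linear_combination (ν 0) * E0 + (ν 1) * E1 + (ν 2) * E2
    + ((pd (fun y => v y 0) 0 x * ν 0 + pd (fun y => v y 1) 0 x * ν 1 + pd (fun y => v y 2) 0 x * ν 2) * v x 0
        + (v x 0 * ν 0 + v x 1 * ν 1 + v x 2 * ν 2) * pd (fun y => v y 0) 0 x + pd p 0 x * ν 0) * c00
    + ((pd (fun y => v y 0) 0 x * ν 0 + pd (fun y => v y 1) 0 x * ν 1 + pd (fun y => v y 2) 0 x * ν 2) * v x 1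
        + (v x 0 * ν 0 + v x 1 * ν 1 + v x 2 * ν 2) * pd (fun y => v y 1) 0 x + pd p 0 x * ν 1) * c01
    + ((pd (fun y => v y 0) 0 x * ν 0 + pd (fun y => v y 1) 0 x * ν 1 + pd (fun y => v y 2) 0 x * ν 2) * v x 2
        + (v x 0 * ν 0 + v x 1 * ν 1 + v x 2 * ν 2) * pd (fun y => v y 2) 0 x + pd p 0 x * ν 2) * c02
    + ((pd (fun y => v y 0) 1 x * ν 0 + pd (fun y => v y 1) 1 x * ν 1 + pd (fun y => v y 2) 1 x * ν 2) * v x 0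
        + (v x 0 * ν 0 + v x 1 * ν 1 + v x 2 * ν 2) * pd (fun y => v y 0) 1 x + pd p 1 x * ν 0) * c10
    + ((pd (fun y => v y 0) 1 x * ν 0 + pd (fun y => v y 1) 1 x * ν 1 + pd (fun y => v y 2) 1 x * ν 2) * v x 1
        + (v x 0 * ν 0 + v x 1 * ν 1 + v x 2 * ν 2) * pd (fun y => v y 1) 1 x + pd p 1 x * ν 1) * c11
    + ((pd (fun y => v y 0) 1 x * ν 0 + pd (fun y => v y 1) 1 x * ν 1 + pd (fun y => v y 2) 1 x * ν 2) * v x 2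
        + (v x 0 * ν 0 + v x 1 * ν 1 + v x 2 * ν 2) * pd (fun y => v y 2) 1 x + pd p 1 x * ν 2) * c12
    + ((pd (fun y => v y 0) 2 x * ν 0 + pd (fun y => v y 1) 2 x * ν 1 + pd (fun y => v y 2) 2 x * ν 2) * v x 0
        + (v x 0 * ν 0 + v x 1 * ν 1 + v x 2 * ν 2) * pd (fun y => v y 0) 2 x + pd p 2 x * ν 0) * c20
    + ((pd (fun y => v y 0) 2 x * ν 0 + pd (fun y => v y 1) 2 x * ν 1 + pd (fun y => v y 2) 2 x * ν 2) * v x 1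
        + (v x 0 * ν 0 + v x 1 * ν 1 + v x 2 * ν 2) * pd (fun y => v y 1) 2 x + pd p 2 x * ν 1) * c21
    + ((pd (fun y => v y 0) 2 x * ν 0 + pd (fun y => v y 1) 2 x * ν 1 + pd (fun y => v y 2) 2 x * ν 2) * v x 2
        + (v x 0 * ν 0 + v x 1 * ν 1 + v x 2 * ν 2) * pd (fun y => v y 2) 2 x + pd p 2 x * ν 2) * c22

end Aux

theorem stmt3
    (v : (Fin 3 → ℝ) → (Fin 3 → ℝ)) (p : (Fin 3 → ℝ) → ℝ)
    (hv : ContDiff ℝ (⊤ : ℕ∞) v) (hp : ContDiff ℝ (⊤ : ℕ∞) p)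
    (hvs : HasCompactSupport v) (hps : HasCompactSupport p)
    (euler : ∀ (x : Fin 3 → ℝ) (i : Fin 3),
      (∑ j : Fin 3, pd (fun y => v y i * v y j) j x) + pd p i x = 0)
    -- an affine plane `L` through `x₀` with orthonormal basis `e, f` of its
    -- direction plane and unit normal `ν`
    (x₀ ν e f : Fin 3 → ℝ)
    (hν : dot3 ν ν = 1) (he : dot3 e e = 1) (hf : dot3 f f = 1)
    (hef : dot3 e f = 0) (heν : dot3 e ν = 0) (hfν : dot3 f ν = 0) :
    ∫ q : ℝ × ℝ, (p (x₀ + q.1 • e + q.2 • f) +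
      dot3 (v (x₀ + q.1 • e + q.2 • f)) ν ^ 2) = 0 := by
  classical
  have hcomp := comp_rel e f ν hν he hf hef heν hfν
  set ιh := iotaHomeo x₀ e f ν hν he hf hef heν hfν with hιh
  -- the three flux fields pulled back by the affine parametrization
  set dd : Fin 3 → E3 := ![e, f, ν] with hdd
  set F : Fin 3 → E3 → ℝ := fun i y => Wf v p ν (dd i) (x₀ + Lmap e f ν y) with hF
  set F' : Fin 3 → E3 → E3 →L[ℝ] ℝ :=
    fun i y => (fderiv ℝ (Wf v p ν (dd i)) (x₀ + Lmap e f ν y)).comp (Lmap e f ν) with hF'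
  have hWc : ∀ d, ContDiff ℝ (⊤ : ℕ∞) (Wf v p ν d) := Wf_contDiff v p hv hp ν
  have hFsupp : ∀ i, HasCompactSupport (F i) := by
    intro i
    exact (Wf_support v p hvs hps ν (dd i)).comp_homeomorph ιh
  -- choose a big box
  have hbd := (((hFsupp 0).isBounded.union (hFsupp 1).isBounded).union
      (hFsupp 2).isBounded).subset_closedBall 0
  obtain ⟨R₀, hR₀⟩ := hbd
  set R : ℝ := max R₀ 0 + 1 with hRdef
  have hRpos : 0 < R := by positivity
  have hR₀R : R₀ < R := by
    have : R₀ ≤ max R₀ 0 := le_max_left _ _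
    linarith
  have hzero : ∀ (j : Fin 3) (z : E3) (k : Fin 3), R ≤ |z k| → F j z = 0 := by
    intro j z k hk
    by_contra hne
    have hmem : z ∈ tsupport (F j) := subset_closure (by simpa [Function.mem_support] using hne)
    have hz : z ∈ Metric.closedBall (0 : E3) R₀ := by
      apply hR₀
      fin_cases j
      · exact Or.inl (Or.inl hmem)
      · exact Or.inl (Or.inr hmem)
      · exact Or.inr hmem
    have h1 : ‖z‖ ≤ R₀ := by simpa [Metric.mem_closedBall] using hz
    have h2 : |z k| ≤ ‖z‖ := by
      simpa [Real.norm_eq_abs] using norm_le_pi_norm z k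
    linarith
  set a : Fin 3 → ℝ := ![-R, -R, 0] with ha
  set b : Fin 3 → ℝ := ![R, R, R] with hb
  have hle : a ≤ b := by
    intro i
    fin_cases i <;> simp [ha, hb] <;> linarith
  have hι : ∀ y : E3, HasFDerivAt (fun y => x₀ + Lmap e f ν y) (Lmap e f ν) y := fun y =>
    ((Lmap e f ν).hasFDerivAt (x := y)).const_add x₀
  have Hd : ∀ y, ∀ i : Fin 3, HasFDerivAt (F i) (F' i y) y := by
    intro y i
    exact (((hWc (dd i)).differentiable (by simp)).differentiableAt.hasFDerivAt).comp y (hι y)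
  -- the divergence vanishes identically
  have hL0 : Lmap e f ν (Pi.single 0 1) = e := by
    funext j; simp [Lmap_apply]
  have hL1 : Lmap e f ν (Pi.single 1 1) = f := by
    funext j; simp [Lmap_apply]
  have hL2 : Lmap e f ν (Pi.single 2 1) = ν := by
    funext j; simp [Lmap_apply]
  have hdiv0 : ∀ y : E3, (∑ i : Fin 3, F' i y (Pi.single i 1)) = 0 := by
    intro y
    rw [Fin.sum_univ_three]
    simp only [hF', ContinuousLinearMap.comp_apply, hL0, hL1, hL2]
    have hd0 : dd 0 = e := rfl
    have hd1 : dd 1 = f := rfl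
    have hd2 : dd 2 = ν := rfl
    rw [hd0, hd1, hd2]
    exact key v p hv hp euler e f ν hcomp (x₀ + Lmap e f ν y)
  have hdivfun : (fun y : E3 => ∑ i : Fin 3, F' i y (Pi.single i 1)) = fun _ => 0 :=
    funext hdiv0
  -- apply the divergence theorem
  have hdt := integral_divergence_of_hasFDerivAt_off_countable' a b hle F F'
    (∅ : Set E3) Set.countable_empty
    (fun i => (((hWc (dd i)).continuous).comp
      (continuous_const.add (Lmap e f ν).continuous)).continuousOn)
    (fun x _ i => Hd x i)
    (by rw [IntegrableOn, hdivfun]; simp)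
  rw [hdivfun] at hdt
  simp only [integral_zero] at hdt
  rw [Fin.sum_univ_three] at hdt
  -- all faces except the back face in direction 2 vanish
  have hfront : ∀ i : Fin 3, (fun x : Fin 2 → ℝ => F i (Fin.insertNth i (b i) x)) = fun _ => 0 := by
    intro i
    funext x
    apply hzero i _ i
    rw [Fin.insertNth_apply_same]
    have : b i = R := by fin_cases i <;> rfl
    rw [this, abs_of_pos hRpos]
  have hback0 : (fun x : Fin 2 → ℝ => F 0 (Fin.insertNth 0 (a 0) x)) = fun _ => 0 := by
    funext x
    apply hzero 0 _ 0
    rw [Fin.insertNth_apply_same]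
    have : a 0 = -R := rfl
    rw [this, abs_neg, abs_of_pos hRpos]
  have hback1 : (fun x : Fin 2 → ℝ => F 1 (Fin.insertNth 1 (a 1) x)) = fun _ => 0 := by
    funext x
    apply hzero 1 _ 1
    rw [Fin.insertNth_apply_same]
    have : a 1 = -R := rfl
    rw [this, abs_neg, abs_of_pos hRpos]
  rw [hfront 0, hfront 1, hfront 2, hback0, hback1] at hdt
  simp only [integral_zero, sub_zero, zero_sub, zero_add] at hdt
  -- hence the face integral over the plane vanishes
  have hface2 : (∫ x in Set.Icc (a ∘ Fin.succAbove 2) (b ∘ Fin.succAbove 2),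
      F 2 (Fin.insertNth 2 (a 2) x)) = 0 := by linarith [hdt]
  -- extend to an integral over the whole plane
  have ha2 : a 2 = 0 := rfl
  rw [ha2] at hface2
  have hext : (∫ x : Fin 2 → ℝ, F 2 (Fin.insertNth 2 (0:ℝ) x)) = 0 := by
    rw [← setIntegral_eq_integral_of_forall_compl_eq_zero (s := Set.Icc (a ∘ Fin.succAbove 2)
      (b ∘ Fin.succAbove 2)) ?_]
    · exact hface2
    · intro x hx
      have hx' : ¬((a ∘ Fin.succAbove 2) ≤ x ∧ x ≤ (b ∘ Fin.succAbove 2)) := by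
        simpa [Set.mem_Icc] using hx
      rw [not_and_or] at hx'
      have hj : ∃ j : Fin 2, R ≤ |x j| := by
        rcases hx' with h | h
        · rw [Pi.le_def] at h
          push_neg at h
          obtain ⟨j, hj⟩ := h
          have hval : (a ∘ Fin.succAbove 2) j = -R := by fin_cases j <;> rfl
          rw [hval] at hj
          exact ⟨j, le_abs.mpr (Or.inr (by linarith))⟩
        · rw [Pi.le_def] at h
          push_neg at h
          obtain ⟨j, hj⟩ := h
          have hval : (b ∘ Fin.succAbove 2) j = R := by fin_cases j <;> rfl
          rw [hval] at hj
          exact ⟨j, le_abs.mpr (Or.inl (by linarith))⟩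
      obtain ⟨j, hj⟩ := hj
      apply hzero 2 _ (Fin.succAbove 2 j)
      rw [Fin.insertNth_apply_succAbove]
      exact hj
  -- identify the integrand with the target
  have hins : ∀ x : Fin 2 → ℝ, Fin.insertNth (2 : Fin 3) (0:ℝ) x = ![x 0, x 1, 0] := by
    intro x; funext j; fin_cases j <;> rfl
  have hpt : ∀ x : Fin 2 → ℝ,
      x₀ + Lmap e f ν (Fin.insertNth (2 : Fin 3) (0:ℝ) x) = x₀ + x 0 • e + x 1 • f := by
    intro x
    rw [hins, Lmap_apply]
    simp [add_assoc]
  have hF2 : ∀ x : Fin 2 → ℝ, F 2 (Fin.insertNth (2 : Fin 3) (0:ℝ) x)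
      = p (x₀ + x 0 • e + x 1 • f) + dot3 (v (x₀ + x 0 • e + x 1 • f)) ν ^ 2 := by
    intro x
    show Wf v p ν (dd 2) (x₀ + Lmap e f ν (Fin.insertNth (2 : Fin 3) (0:ℝ) x)) = _
    rw [hpt x]
    show dot3 (v _) ν * dot3 (v _) ν + p _ * dot3 ν ν = _
    rw [hν]
    ring
  have hintcomp := (volume_preserving_finTwoArrow ℝ).integral_comp
    (MeasurableEquiv.finTwoArrow (α := ℝ)).measurableEmbedding
    (fun q : ℝ × ℝ => p (x₀ + q.1 • e + q.2 • f) + dot3 (v (x₀ + q.1 • e + q.2 • f)) ν ^ 2)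
  calc ∫ q : ℝ × ℝ, (p (x₀ + q.1 • e + q.2 • f) +
          dot3 (v (x₀ + q.1 • e + q.2 • f)) ν ^ 2)
      = ∫ y : Fin 2 → ℝ, (p (x₀ + (MeasurableEquiv.finTwoArrow y).1 • e
            + (MeasurableEquiv.finTwoArrow y).2 • f) +
          dot3 (v (x₀ + (MeasurableEquiv.finTwoArrow y).1 • e
            + (MeasurableEquiv.finTwoArrow y).2 • f)) ν ^ 2) := hintcomp.symm
    _ = ∫ y : Fin 2 → ℝ, F 2 (Fin.insertNth (2 : Fin 3) (0:ℝ) y) := by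
        congr 1
        funext y
        have h12 : (MeasurableEquiv.finTwoArrow (α := ℝ) y) = (y 0, y 1) := rfl
        rw [h12, hF2 y]
    _ = 0 := hext
end

section
/- Let Q₀ be the symmetric 2-tensor field Q₀ = (p + |v|²)δ_{ij} − 2 vⁱvʲ where (v,p) is a smooth compactly supported solution of the steady Euler momentum equations. Then the Radon plane transform JQ₀(L) = ∫_L tr(Q₀|_L) dσ_L vanishes for every affine plane L ⊂ ℝ³. -/
open MeasureTheory

/-- The symmetric 2-tensor `Q₀ = (p + |v|²) δᵢⱼ - 2 vⁱ vʲ`. -/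
def Q0 (v : (Fin 3 → ℝ) → (Fin 3 → ℝ)) (p : (Fin 3 → ℝ) → ℝ)
    (x : Fin 3 → ℝ) (i j : Fin 3) : ℝ :=
  (p x + ∑ k, v x k ^ 2) * (if i = j then 1 else 0) - 2 * v x i * v x j





/-- The contraction `x ↦ ∑ⱼ ((v·ν) vⱼ + p νⱼ) dⱼ`, written in a differentiation-friendly way. -/
def AV (v : (Fin 3 → ℝ) → (Fin 3 → ℝ)) (p : (Fin 3 → ℝ) → ℝ) (ν d : Fin 3 → ℝ)
    (x : Fin 3 → ℝ) : ℝ :=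
  ∑ j, d j * (∑ i, ν i * (v x i * v x j)) + dot3 d ν * p x

lemma hasDerivAt_comp_line {g : (Fin 3 → ℝ) → ℝ} (hg : Differentiable ℝ g)
    (y d : Fin 3 → ℝ) (r : ℝ) :
    HasDerivAt (fun r : ℝ => g (y + r • d)) (∑ k, d k * pd g k (y + r • d)) r := by
  have hline : HasDerivAt (fun r : ℝ => y + r • d) d r := by
    simpa using ((hasDerivAt_id r).smul_const d).const_add y
  have h2 := (hg (y + r • d)).hasFDerivAt.comp_hasDerivAt r hline
  refine h2.congr_deriv ?_
  have hd : d = ∑ k, d k • (Pi.single k 1 : Fin 3 → ℝ) := by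
    funext j
    simp [Finset.sum_apply, Pi.single_apply]
  have happ : ∀ L : (Fin 3 → ℝ) →L[ℝ] ℝ, L d = ∑ k, d k * L (Pi.single k 1) := by
    intro L
    conv_lhs => rw [hd]
    rw [map_sum]
    simp
  rw [happ]
  rfl

lemma contDiff_AV {v : (Fin 3 → ℝ) → (Fin 3 → ℝ)} {p : (Fin 3 → ℝ) → ℝ}
    (hv : ContDiff ℝ (⊤ : ℕ∞) v) (hp : ContDiff ℝ (⊤ : ℕ∞) p) (ν d : Fin 3 → ℝ) :
    ContDiff ℝ (⊤ : ℕ∞) (AV v p ν d) := by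
  have hvj : ∀ j, ContDiff ℝ (⊤ : ℕ∞) fun x => v x j := fun j => (contDiff_pi.mp hv) j
  refine ContDiff.add ?_ (contDiff_const.mul hp)
  exact ContDiff.sum fun j _ =>
    contDiff_const.mul (ContDiff.sum fun i _ => contDiff_const.mul ((hvj i).mul (hvj j)))

lemma pd_AV {v : (Fin 3 → ℝ) → (Fin 3 → ℝ)} {p : (Fin 3 → ℝ) → ℝ}
    (hv : ContDiff ℝ (⊤ : ℕ∞) v) (hp : ContDiff ℝ (⊤ : ℕ∞) p) (ν d : Fin 3 → ℝ) (k : Fin 3)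
    (x : Fin 3 → ℝ) :
    pd (AV v p ν d) k x =
      ∑ j, d j * (∑ i, ν i * pd (fun y => v y i * v y j) k x) + dot3 d ν * pd p k x := by
  have hvj : ∀ j, ContDiff ℝ (⊤ : ℕ∞) fun x => v x j := fun j => (contDiff_pi.mp hv) j
  have hmul : ∀ i j, DifferentiableAt ℝ (fun y => v y i * v y j) x := fun i j =>
    (((hvj i).mul (hvj j)).differentiable (by simp)).differentiableAt
  have hinner : ∀ j, DifferentiableAt ℝ (fun y => ∑ i, ν i * (v y i * v y j)) x := fun j =>
    DifferentiableAt.fun_sum fun i _ => (hmul i j).const_mul _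
  have houter : ∀ j, DifferentiableAt ℝ (fun y => d j * ∑ i, ν i * (v y i * v y j)) x :=
    fun j => (hinner j).const_mul _
  have hsum : DifferentiableAt ℝ (fun y => ∑ j, d j * ∑ i, ν i * (v y i * v y j)) x :=
    DifferentiableAt.fun_sum fun j _ => houter j
  have hpd : DifferentiableAt ℝ p x := (hp.differentiable (by simp)).differentiableAt
  unfold pd AV
  rw [fderiv_fun_add hsum (hpd.const_mul _), fderiv_const_mul hpd,
    fderiv_fun_sum fun j _ => houter j]
  simp only [ContinuousLinearMap.add_apply, ContinuousLinearMap.sum_apply,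
    ContinuousLinearMap.smul_apply, smul_eq_mul]
  congr 1
  refine Finset.sum_congr rfl fun j _ => ?_
  rw [fderiv_const_mul (hinner j), fderiv_fun_sum fun i _ => (hmul i j).const_mul _]
  simp only [ContinuousLinearMap.smul_apply, ContinuousLinearMap.sum_apply, smul_eq_mul]
  congr 1
  refine Finset.sum_congr rfl fun i _ => ?_
  rw [fderiv_const_mul (hmul i j)]
  simp

lemma continuous_pd {g : (Fin 3 → ℝ) → ℝ} (hg : ContDiff ℝ (⊤ : ℕ∞) g) (k : Fin 3) :
    Continuous fun x => pd g k x := by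
  exact (hg.continuous_fderiv (by simp)).clm_apply continuous_const

lemma frame_sum' {e f ν : Fin 3 → ℝ}
    (hcomp : ∀ j k : Fin 3, e j * e k + f j * f k + ν j * ν k = if j = k then (1:ℝ) else 0)
    (P : Fin 3 → Fin 3 → ℝ) :
    (∑ k, e k * ∑ j, e j * P j k) + (∑ k, f k * ∑ j, f j * P j k)
      + (∑ k, ν k * ∑ j, ν j * P j k) = ∑ k, P k k := by
  have h00 : e 0 * e 0 + f 0 * f 0 + ν 0 * ν 0 = 1 := by simpa using hcomp 0 0
  have h11 : e 1 * e 1 + f 1 * f 1 + ν 1 * ν 1 = 1 := by simpa using hcomp 1 1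
  have h22 : e 2 * e 2 + f 2 * f 2 + ν 2 * ν 2 = 1 := by simpa using hcomp 2 2
  have h01 : e 0 * e 1 + f 0 * f 1 + ν 0 * ν 1 = 0 := by simpa using hcomp 0 1
  have h02 : e 0 * e 2 + f 0 * f 2 + ν 0 * ν 2 = 0 := by simpa using hcomp 0 2
  have h12 : e 1 * e 2 + f 1 * f 2 + ν 1 * ν 2 = 0 := by simpa using hcomp 1 2
  simp only [Fin.sum_univ_three]
  linear_combination P 0 0 * h00 + P 1 1 * h11 + P 2 2 * h22 +
    (P 0 1 + P 1 0) * h01 + (P 0 2 + P 2 0) * h02 + (P 1 2 + P 2 1) * h12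

lemma div_frame {v : (Fin 3 → ℝ) → (Fin 3 → ℝ)} {p : (Fin 3 → ℝ) → ℝ}
    (hv : ContDiff ℝ (⊤ : ℕ∞) v) (hp : ContDiff ℝ (⊤ : ℕ∞) p)
    (euler : ∀ (x : Fin 3 → ℝ) (i : Fin 3),
      (∑ j : Fin 3, pd (fun y => v y i * v y j) j x) + pd p i x = 0)
    {e f ν : Fin 3 → ℝ}
    (hcomp : ∀ j k : Fin 3, e j * e k + f j * f k + ν j * ν k = if j = k then (1:ℝ) else 0)
    (heν : dot3 e ν = 0) (hfν : dot3 f ν = 0) (hνν : dot3 ν ν = 1) (x : Fin 3 → ℝ) :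
    (∑ k, e k * pd (AV v p ν e) k x) + (∑ k, f k * pd (AV v p ν f) k x)
      + (∑ k, ν k * pd (AV v p ν ν) k x) = 0 := by
  have hPd := pd_AV hv hp (ν := ν)
  set P : Fin 3 → Fin 3 → ℝ :=
    fun j k => ∑ i, ν i * pd (fun y => v y i * v y j) k x with hP
  have expand : ∀ (d : Fin 3 → ℝ),
      ∑ k, d k * pd (AV v p ν d) k x
        = (∑ k, d k * ∑ j, d j * P j k) + dot3 d ν * ∑ k, d k * pd p k x := by
    intro d
    rw [Finset.mul_sum]
    rw [← Finset.sum_add_distrib]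
    refine Finset.sum_congr rfl fun k _ => ?_
    rw [hPd d k x]
    ring
  rw [expand e, expand f, expand ν, heν, hfν, hνν]
  have hfs := frame_sum' hcomp P
  have h1 : ∑ k, P k k = ∑ i, ν i * ∑ k, pd (fun y => v y i * v y k) k x := by
    rw [hP, Finset.sum_comm]
    exact Finset.sum_congr rfl fun i _ => (Finset.mul_sum _ _ _).symm
  have h2 : (∑ k, P k k) + ∑ k, ν k * pd p k x
      = ∑ i, ν i * ((∑ k, pd (fun y => v y i * v y k) k x) + pd p i x) := by
    rw [h1, ← Finset.sum_add_distrib]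
    exact Finset.sum_congr rfl fun i _ => by ring
  have h3 : ∀ i, ν i * ((∑ k, pd (fun y => v y i * v y k) k x) + pd p i x) = 0 := by
    intro i
    rw [euler x i, mul_zero]
  have hzero : (∑ k, P k k) + ∑ k, ν k * pd p k x = 0 := by
    rw [h2]
    exact Finset.sum_eq_zero fun i _ => h3 i
  linear_combination hfs + hzero

/-- Integral over ℝ of the derivative of a compactly supported `C¹` function vanishes. -/
lemma integral_deriv_eq_zero_of_support {h h' : ℝ → ℝ} (S : ℝ)
    (hd : ∀ s, HasDerivAt h (h' s) s) (hc : Continuous h')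
    (hsupp : ∀ s, S < |s| → h s = 0) : ∫ s, h' s = 0 := by
  set T : ℝ := max S 0 + 1 with hT
  have hST : S < T := by
    have : S ≤ max S 0 := le_max_left _ _
    linarith
  have hT0 : 0 ≤ T := by
    have : (0:ℝ) ≤ max S 0 := le_max_right _ _
    linarith
  have hout : ∀ s, T < |s| → h' s = 0 := by
    intro s hs
    have hev : h =ᶠ[nhds s] (fun _ => 0) := by
      have hopen : IsOpen {y : ℝ | T < |y|} := isOpen_lt continuous_const continuous_abs
      filter_upwards [hopen.mem_nhds hs] with y hy
      exact hsupp y (lt_trans hST hy)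
    have : deriv h s = 0 := by
      rw [Filter.EventuallyEq.deriv_eq hev]
      simp
    rw [← (hd s).deriv, this]
  have h1 : ∫ s, h' s = ∫ s in Set.Icc (-T) T, h' s := by
    refine (setIntegral_eq_integral_of_forall_compl_eq_zero fun s hs => ?_).symm
    apply hout
    simp only [Set.mem_Icc, not_and_or, not_le] at hs
    rcases hs with hs | hs
    · rw [abs_of_nonpos (by linarith)]; linarith
    · rw [abs_of_nonneg (by linarith)]; linarith
  have h2 : ∫ s in Set.Icc (-T) T, h' s = ∫ s in (-T)..T, h' s := by
    rw [intervalIntegral.integral_of_le (by linarith), integral_Icc_eq_integral_Ioc]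
  rw [h1, h2, intervalIntegral.integral_eq_sub_of_hasDerivAt
    (fun x _ => hd x) (hc.intervalIntegrable _ _)]
  rw [hsupp T (by rw [abs_of_nonneg hT0]; linarith),
    hsupp (-T) (by rw [abs_neg, abs_of_nonneg hT0]; linarith)]
  ring

/-- Pure algebra: completeness relation implies frame contraction identity. -/
lemma frame_sum {e f ν : Fin 3 → ℝ}
    (hcomp : ∀ j k : Fin 3, e j * e k + f j * f k + ν j * ν k = if j = k then (1:ℝ) else 0)
    (P : Fin 3 → Fin 3 → ℝ) :
    (∑ k, e k * ∑ j, e j * P j k) + (∑ k, f k * ∑ j, f j * P j k)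
      + (∑ k, ν k * ∑ j, ν j * P j k) = ∑ k, P k k := by
  have h00 : e 0 * e 0 + f 0 * f 0 + ν 0 * ν 0 = 1 := by simpa using hcomp 0 0
  have h11 : e 1 * e 1 + f 1 * f 1 + ν 1 * ν 1 = 1 := by simpa using hcomp 1 1
  have h22 : e 2 * e 2 + f 2 * f 2 + ν 2 * ν 2 = 1 := by simpa using hcomp 2 2
  have h01 : e 0 * e 1 + f 0 * f 1 + ν 0 * ν 1 = 0 := by simpa using hcomp 0 1
  have h02 : e 0 * e 2 + f 0 * f 2 + ν 0 * ν 2 = 0 := by simpa using hcomp 0 2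
  have h12 : e 1 * e 2 + f 1 * f 2 + ν 1 * ν 2 = 0 := by simpa using hcomp 1 2
  simp only [Fin.sum_univ_three]
  linear_combination P 0 0 * h00 + P 1 1 * h11 + P 2 2 * h22 +
    (P 0 1 + P 1 0) * h01 + (P 0 2 + P 2 0) * h02 + (P 1 2 + P 2 1) * h12



lemma dot3_comm (a b : Fin 3 → ℝ) : dot3 a b = dot3 b a := by
  simp [dot3, mul_comm]

section
open Matrix
/-- Orthonormality of rows implies the completeness relation (columns orthonormal). -/
lemma completeness {e f ν : Fin 3 → ℝ}
    (hν : dot3 ν ν = 1) (he : dot3 e e = 1) (hf : dot3 f f = 1)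
    (hef : dot3 e f = 0) (heν : dot3 e ν = 0) (hfν : dot3 f ν = 0) :
    ∀ j k : Fin 3, e j * e k + f j * f k + ν j * ν k = if j = k then (1:ℝ) else 0 := by
  have hν' : ν 0 * ν 0 + ν 1 * ν 1 + ν 2 * ν 2 = 1 := by
    simpa [dot3, Fin.sum_univ_three] using hν
  have he' : e 0 * e 0 + e 1 * e 1 + e 2 * e 2 = 1 := by
    simpa [dot3, Fin.sum_univ_three] using he
  have hf' : f 0 * f 0 + f 1 * f 1 + f 2 * f 2 = 1 := by
    simpa [dot3, Fin.sum_univ_three] using hf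
  have hef' : e 0 * f 0 + e 1 * f 1 + e 2 * f 2 = 0 := by
    simpa [dot3, Fin.sum_univ_three] using hef
  have heν' : e 0 * ν 0 + e 1 * ν 1 + e 2 * ν 2 = 0 := by
    simpa [dot3, Fin.sum_univ_three] using heν
  have hfν' : f 0 * ν 0 + f 1 * ν 1 + f 2 * ν 2 = 0 := by
    simpa [dot3, Fin.sum_univ_three] using hfν
  set M : Matrix (Fin 3) (Fin 3) ℝ := Matrix.of ![e, f, ν] with hM
  have hMMT : M * Mᵀ = 1 := by
    ext i j
    fin_cases i <;> fin_cases j <;>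
      simp only [hM, Matrix.mul_apply, Matrix.transpose_apply, Fin.sum_univ_three, Matrix.of_apply,
        Matrix.cons_val_zero, Matrix.cons_val_one, Matrix.cons_val_two, Matrix.head_cons,
        Matrix.tail_cons, Matrix.one_apply, if_true, if_false] <;> norm_num [Fin.ext_iff] <;>
      linarith [he', hf', hν', hef', heν', hfν']
  have hMTM : Mᵀ * M = 1 := mul_eq_one_comm.mp hMMT
  intro j k
  have h := congrFun (congrFun (congrArg (fun A => A) hMTM) j) k
  have h2 : (Mᵀ * M) j k = e j * e k + f j * f k + ν j * ν k := by
    simp only [hM, Matrix.mul_apply, Matrix.transpose_apply, Fin.sum_univ_three, Matrix.of_apply,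
      Matrix.cons_val_zero, Matrix.cons_val_one, Matrix.cons_val_two, Matrix.head_cons,
      Matrix.tail_cons]
  have h3 : (1 : Matrix (Fin 3) (Fin 3) ℝ) j k = if j = k then (1:ℝ) else 0 :=
    Matrix.one_apply
  rw [← h2, ← h3]
  exact congrFun (congrFun hMTM j) k

end

/-- Pointwise identity between the statement's integrand and `2 * AV v p ν ν`. -/
lemma integrand_eq {v : (Fin 3 → ℝ) → (Fin 3 → ℝ)} {p : (Fin 3 → ℝ) → ℝ}
    {ν : Fin 3 → ℝ} (hν : dot3 ν ν = 1) (x : Fin 3 → ℝ) :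
    ((∑ i, Q0 v p x i i) - ∑ i, ∑ j, Q0 v p x i j * ν i * ν j) = 2 * AV v p ν ν x := by
  have hν' : ν 0 * ν 0 + ν 1 * ν 1 + ν 2 * ν 2 = 1 := by
    simpa [dot3, Fin.sum_univ_three] using hν
  simp [Q0, AV, dot3, Fin.sum_univ_three]
  linear_combination (-(3 * p x) - v x 0 ^ 2 - v x 1 ^ 2 - v x 2 ^ 2) * hν'


theorem stmt4
    (v : (Fin 3 → ℝ) → (Fin 3 → ℝ)) (p : (Fin 3 → ℝ) → ℝ)
    (hv : ContDiff ℝ (⊤ : ℕ∞) v) (hp : ContDiff ℝ (⊤ : ℕ∞) p)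
    (hvs : HasCompactSupport v) (hps : HasCompactSupport p)
    (euler : ∀ (x : Fin 3 → ℝ) (i : Fin 3),
      (∑ j : Fin 3, pd (fun y => v y i * v y j) j x) + pd p i x = 0)
    -- an affine plane `L` through `x₀` with orthonormal basis `e, f` of its
    -- direction plane and unit normal `ν`
    (x₀ ν e f : Fin 3 → ℝ)
    (hν : dot3 ν ν = 1) (he : dot3 e e = 1) (hf : dot3 f f = 1)
    (hef : dot3 e f = 0) (heν : dot3 e ν = 0) (hfν : dot3 f ν = 0) :
    -- `J Q₀ (L) = ∫_L tr (Q₀|_L) dσ_L = 0`, where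
    -- `tr (Q₀|_L) = tr Q₀ - Q₀(ν_L, ν_L)`
    ∫ q : ℝ × ℝ,
      ((∑ i, Q0 v p (x₀ + q.1 • e + q.2 • f) i i) -
        ∑ i, ∑ j, Q0 v p (x₀ + q.1 • e + q.2 • f) i j * ν i * ν j) = 0 := by
  have hcomp := completeness hν he hf hef heν hfν
  -- basic smoothness facts
  have hAVc : ∀ d, Continuous (AV v p ν d) := fun d => (contDiff_AV hv hp ν d).continuous
  have hAVd : ∀ d, Differentiable ℝ (AV v p ν d) :=
    fun d => (contDiff_AV hv hp ν d).differentiable (by simp)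
  have hpdc : ∀ d k, Continuous (pd (AV v p ν d) k) :=
    fun d k => continuous_pd (contDiff_AV hv hp ν d) k
  -- support radius
  obtain ⟨ρv, hρv⟩ := hvs.isBounded.subset_closedBall 0
  obtain ⟨ρp, hρp⟩ := hps.isBounded.subset_closedBall 0
  set ρ : ℝ := max (max ρv ρp) 0 with hρdef
  have hρ0 : 0 ≤ ρ := le_max_right _ _
  have hvanish0 : ∀ x : Fin 3 → ℝ, ρ < ‖x‖ → v x = 0 ∧ p x = 0 := by
    intro x hx
    have hxv : x ∉ tsupport v := fun hx' => by
      have h1 := hρv hx'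
      rw [Metric.mem_closedBall, dist_zero_right] at h1
      have : ρv ≤ ρ := (le_max_left _ _).trans (le_max_left _ _)
      linarith
    have hxp : x ∉ tsupport p := fun hx' => by
      have h1 := hρp hx'
      rw [Metric.mem_closedBall, dist_zero_right] at h1
      have : ρp ≤ ρ := (le_max_right _ _).trans (le_max_left _ _)
      linarith
    exact ⟨image_eq_zero_of_notMem_tsupport hxv, image_eq_zero_of_notMem_tsupport hxp⟩
  have hAV0 : ∀ (d : Fin 3 → ℝ) (x : Fin 3 → ℝ), ρ < ‖x‖ → AV v p ν d x = 0 := by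
    intro d x hx
    obtain ⟨hv0, hp0⟩ := hvanish0 x hx
    simp [AV, hv0, hp0]
  have hpdAV0 : ∀ (d : Fin 3 → ℝ) (k : Fin 3) (x : Fin 3 → ℝ), ρ < ‖x‖ →
      pd (AV v p ν d) k x = 0 := by
    intro d k x hx
    have hopen : IsOpen {y : Fin 3 → ℝ | ρ < ‖y‖} := isOpen_lt continuous_const continuous_norm
    have hev : AV v p ν d =ᶠ[nhds x] fun _ => (0:ℝ) := by
      filter_upwards [hopen.mem_nhds hx] with y hy using hAV0 d y hy
    unfold pd
    rw [hev.fderiv_eq]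
    simp
  -- geometry
  have hdotnorm : ∀ (x d : Fin 3 → ℝ), dot3 d d = 1 → |dot3 x d| ≤ 3 * ‖x‖ := by
    intro x d hd
    have hd' : d 0 * d 0 + d 1 * d 1 + d 2 * d 2 = 1 := by
      simpa [dot3, Fin.sum_univ_three] using hd
    have hb0 : |d 0| ≤ 1 := by
      rw [abs_le_one_iff_mul_self_le_one]
      nlinarith [mul_self_nonneg (d 1), mul_self_nonneg (d 2)]
    have hb1 : |d 1| ≤ 1 := by
      rw [abs_le_one_iff_mul_self_le_one]
      nlinarith [mul_self_nonneg (d 0), mul_self_nonneg (d 2)]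
    have hb2 : |d 2| ≤ 1 := by
      rw [abs_le_one_iff_mul_self_le_one]
      nlinarith [mul_self_nonneg (d 0), mul_self_nonneg (d 1)]
    have hx : ∀ k : Fin 3, |x k| ≤ ‖x‖ := fun k => by
      simpa [Real.norm_eq_abs] using norm_le_pi_norm x k
    have hxn : (0:ℝ) ≤ ‖x‖ := norm_nonneg _
    calc |dot3 x d| = |x 0 * d 0 + x 1 * d 1 + x 2 * d 2| := by
          simp [dot3, Fin.sum_univ_three]
      _ ≤ |x 0 * d 0| + |x 1 * d 1| + |x 2 * d 2| := abs_add_three _ _ _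
      _ ≤ 3 * ‖x‖ := by
          rw [abs_mul, abs_mul, abs_mul]
          have h0 := mul_le_mul (hx 0) hb0 (abs_nonneg _) hxn
          have h1 := mul_le_mul (hx 1) hb1 (abs_nonneg _) hxn
          have h2 := mul_le_mul (hx 2) hb2 (abs_nonneg _) hxn
          linarith
  have hdot_exp : ∀ (s t r : ℝ) (d : Fin 3 → ℝ),
      dot3 (x₀ + s • e + t • f + r • ν) d
        = dot3 x₀ d + s * dot3 e d + t * dot3 f d + r * dot3 ν d := by
    intro s t r d
    simp only [dot3, Fin.sum_univ_three, Pi.add_apply, Pi.smul_apply, smul_eq_mul]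
    ring
  set S : ℝ := 3*ρ + |dot3 x₀ e| + |dot3 x₀ f| + |dot3 x₀ ν| + 1 with hSdef
  have hS1 : 1 ≤ S := by
    have := abs_nonneg (dot3 x₀ e); have := abs_nonneg (dot3 x₀ f)
    have := abs_nonneg (dot3 x₀ ν)
    rw [hSdef]; linarith
  have hfar : ∀ s t r : ℝ, S < |s| ∨ S < |t| ∨ S < |r| →
      ρ < ‖x₀ + s • e + t • f + r • ν‖ := by
    intro s t r hcase
    have key : ∀ (d : Fin 3 → ℝ) (w : ℝ), dot3 d d = 1 →
        |dot3 x₀ d| + 3*ρ + 1 ≤ S →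
        dot3 (x₀ + s • e + t • f + r • ν) d = dot3 x₀ d + w → S < |w| →
        ρ < ‖x₀ + s • e + t • f + r • ν‖ := by
      intro d w hd hSd hxd hw
      have h1 := hdotnorm (x₀ + s • e + t • f + r • ν) d hd
      have h2 : |w| ≤ |dot3 (x₀ + s • e + t • f + r • ν) d| + |dot3 x₀ d| := by
        have hw' : w = dot3 (x₀ + s • e + t • f + r • ν) d - dot3 x₀ d := by linarith
        rw [hw']
        exact abs_sub _ _
      linarith
    rcases hcase with h | h | h
    · refine key e s he ?_ ?_ h
      · have := abs_nonneg (dot3 x₀ f); have := abs_nonneg (dot3 x₀ ν)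
        rw [hSdef]; linarith
      · rw [hdot_exp, he, dot3_comm f e, hef, dot3_comm ν e, heν]; ring
    · refine key f t hf ?_ ?_ h
      · have := abs_nonneg (dot3 x₀ e); have := abs_nonneg (dot3 x₀ ν)
        rw [hSdef]; linarith
      · rw [hdot_exp, hf, hef, dot3_comm ν f, hfν]; ring
    · refine key ν r hν ?_ ?_ h
      · have := abs_nonneg (dot3 x₀ e); have := abs_nonneg (dot3 x₀ f)
        rw [hSdef]; linarith
      · rw [hdot_exp, hν, heν, hfν]; ring
  -- square support set
  set K2 : Set (ℝ × ℝ) := Set.Icc (-S) S ×ˢ Set.Icc (-S) S with hK2def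
  have hK2c : IsCompact K2 := isCompact_Icc.prod isCompact_Icc
  have hK2m : MeasurableSet K2 := measurableSet_Icc.prod measurableSet_Icc
  have habs' : ∀ u : ℝ, u ∉ Set.Icc (-S) S → S < |u| := by
    intro u hu
    rw [Set.mem_Icc, not_and_or, not_le, not_le] at hu
    rcases hu with hu | hu
    · calc S < -u := by linarith
        _ ≤ |u| := neg_le_abs u
    · exact hu.trans_le (le_abs_self u)
  have hqout : ∀ q : ℝ × ℝ, q ∉ K2 → ∀ r : ℝ, ρ < ‖x₀ + q.1 • e + q.2 • f + r • ν‖ := by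
    intro q hq r
    rw [hK2def, Set.mem_prod, not_and_or] at hq
    rcases hq with hq | hq
    · exact hfar _ _ _ (Or.inl (habs' _ hq))
    · exact hfar _ _ _ (Or.inr (Or.inl (habs' _ hq)))
  have hlin : ∀ r : ℝ, Continuous fun q : ℝ × ℝ => x₀ + q.1 • e + q.2 • f + r • ν := by
    intro r
    exact ((continuous_const.add (continuous_fst.smul continuous_const)).add
      (continuous_snd.smul continuous_const)).add continuous_const
  have hlin2 : Continuous fun z : (ℝ × ℝ) × ℝ => x₀ + z.1.1 • e + z.1.2 • f + z.2 • ν := by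
    exact ((continuous_const.add (continuous_fst.fst.smul continuous_const)).add
      (continuous_fst.snd.smul continuous_const)).add (continuous_snd.smul continuous_const)
  have hcint : ∀ r : ℝ,
      Integrable (fun q : ℝ × ℝ => AV v p ν ν (x₀ + q.1 • e + q.2 • f + r • ν)) := by
    intro r
    refine ((hAVc ν).comp (hlin r)).integrable_of_hasCompactSupport ?_
    exact HasCompactSupport.intro hK2c fun q hq => hAV0 ν _ (hqout q hq r)
  have main : ∀ r₀ : ℝ,
      HasDerivAt (fun r : ℝ => ∫ q : ℝ × ℝ, AV v p ν ν (x₀ + q.1 • e + q.2 • f + r • ν))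
        (∫ q : ℝ × ℝ, ∑ k, ν k * pd (AV v p ν ν) k (x₀ + q.1 • e + q.2 • f + r₀ • ν)) r₀ := by
    intro r₀
    have hGc : Continuous fun z : (ℝ × ℝ) × ℝ =>
        ∑ k, ν k * pd (AV v p ν ν) k (x₀ + z.1.1 • e + z.1.2 • f + z.2 • ν) :=
      continuous_finset_sum _ fun k _ => continuous_const.mul ((hpdc ν k).comp hlin2)
    obtain ⟨C, hC⟩ := (hK2c.prod (isCompact_Icc (a := r₀ - 1)
      (b := r₀ + 1))).exists_bound_of_continuousOn hGc.continuousOn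
    have hbound : ∀ᵐ q : ℝ × ℝ, ∀ r ∈ Metric.ball r₀ 1,
        ‖∑ k, ν k * pd (AV v p ν ν) k (x₀ + q.1 • e + q.2 • f + r • ν)‖
          ≤ K2.indicator (fun _ => max C 0) q := by
      refine Filter.Eventually.of_forall fun q r hr => ?_
      by_cases hq : q ∈ K2
      · rw [Set.indicator_of_mem hq]
        refine le_trans (hC (q, r) (Set.mem_prod.mpr ⟨hq, ?_⟩)) (le_max_left _ _)
        rw [Metric.mem_ball, Real.dist_eq] at hr
        have h2 := abs_le.mp hr.le
        rw [Set.mem_Icc]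
        constructor <;> linarith [h2.1, h2.2]
      · rw [Set.indicator_of_notMem hq]
        have hz : ∀ k, pd (AV v p ν ν) k (x₀ + q.1 • e + q.2 • f + r • ν) = 0 :=
          fun k => hpdAV0 ν k _ (hqout q hq r)
        simp only [hz, mul_zero, Finset.sum_const_zero, norm_zero]
        exact le_rfl
    have hbint : Integrable (K2.indicator fun _ => max C 0) (volume : Measure (ℝ × ℝ)) :=
      (integrableOn_const hK2c.measure_lt_top.ne).integrable_indicator hK2m
    have hdiff : ∀ᵐ q : ℝ × ℝ ∂(volume : Measure (ℝ × ℝ)), ∀ r ∈ Metric.ball r₀ 1,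
        HasDerivAt (fun r : ℝ => AV v p ν ν (x₀ + q.1 • e + q.2 • f + r • ν))
          (∑ k, ν k * pd (AV v p ν ν) k (x₀ + q.1 • e + q.2 • f + r • ν)) r :=
      Filter.Eventually.of_forall fun q r _ =>
        hasDerivAt_comp_line (hAVd ν) (x₀ + q.1 • e + q.2 • f) ν r
    exact (hasDerivAt_integral_of_dominated_loc_of_deriv_le (Metric.ball_mem_nhds r₀ one_pos)
      (Filter.Eventually.of_forall fun r => ((hAVc ν).comp (hlin r)).aestronglyMeasurable)
      (hcint r₀)
      ((continuous_finset_sum _ fun k _ =>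
        continuous_const.mul ((hpdc ν k).comp (hlin r₀))).aestronglyMeasurable)
      hbound hbint hdiff).2
  -- rearranged base points for the tangential directions
  have harg1 : ∀ s t r : ℝ, (x₀ + t • f + r • ν) + s • e = x₀ + s • e + t • f + r • ν := by
    intro s t r
    funext i
    simp only [Pi.add_apply, Pi.smul_apply, smul_eq_mul]
    ring
  have harg2 : ∀ s t r : ℝ, (x₀ + s • e + r • ν) + t • f = x₀ + s • e + t • f + r • ν := by
    intro s t r
    funext i
    simp only [Pi.add_apply, Pi.smul_apply, smul_eq_mul]
    ring
  have hgcont : ∀ (d : Fin 3 → ℝ) (r : ℝ), Continuous fun q : ℝ × ℝ =>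
      ∑ k, d k * pd (AV v p ν d) k (x₀ + q.1 • e + q.2 • f + r • ν) := fun d r =>
    continuous_finset_sum _ fun k _ => continuous_const.mul ((hpdc d k).comp (hlin r))
  have hgint : ∀ (d : Fin 3 → ℝ) (r : ℝ), Integrable (fun q : ℝ × ℝ =>
      ∑ k, d k * pd (AV v p ν d) k (x₀ + q.1 • e + q.2 • f + r • ν))
      (volume : Measure (ℝ × ℝ)) := by
    intro d r
    refine (hgcont d r).integrable_of_hasCompactSupport ?_
    refine HasCompactSupport.intro hK2c fun q hq => ?_
    have hz : ∀ k, pd (AV v p ν d) k (x₀ + q.1 • e + q.2 • f + r • ν) = 0 :=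
      fun k => hpdAV0 d k _ (hqout q hq r)
    simp [hz]
  have hinner1 : ∀ t r : ℝ,
      (∫ s : ℝ, ∑ k, e k * pd (AV v p ν e) k (x₀ + s • e + t • f + r • ν)) = 0 := by
    intro t r
    have h0 := integral_deriv_eq_zero_of_support S
      (h := fun s : ℝ => AV v p ν e ((x₀ + t • f + r • ν) + s • e))
      (h' := fun s : ℝ => ∑ k, e k * pd (AV v p ν e) k ((x₀ + t • f + r • ν) + s • e))
      (fun s => hasDerivAt_comp_line (hAVd e) _ e s)
      (continuous_finset_sum _ fun k _ => continuous_const.mul ((hpdc e k).comp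
        (continuous_const.add (continuous_id.smul continuous_const))))
      (fun s hs => by
        have hz := hAV0 e _ (hfar s t r (Or.inl hs))
        rw [← harg1 s t r] at hz
        exact hz)
    calc (∫ s : ℝ, ∑ k, e k * pd (AV v p ν e) k (x₀ + s • e + t • f + r • ν))
        = ∫ s : ℝ, ∑ k, e k * pd (AV v p ν e) k ((x₀ + t • f + r • ν) + s • e) := by
          simp_rw [harg1]
      _ = 0 := h0
  have hinner2 : ∀ s r : ℝ,
      (∫ t : ℝ, ∑ k, f k * pd (AV v p ν f) k (x₀ + s • e + t • f + r • ν)) = 0 := by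
    intro s r
    have h0 := integral_deriv_eq_zero_of_support S
      (h := fun t : ℝ => AV v p ν f ((x₀ + s • e + r • ν) + t • f))
      (h' := fun t : ℝ => ∑ k, f k * pd (AV v p ν f) k ((x₀ + s • e + r • ν) + t • f))
      (fun t => hasDerivAt_comp_line (hAVd f) _ f t)
      (continuous_finset_sum _ fun k _ => continuous_const.mul ((hpdc f k).comp
        (continuous_const.add (continuous_id.smul continuous_const))))
      (fun t ht => by
        have hz := hAV0 f _ (hfar s t r (Or.inr (Or.inl ht)))
        rw [← harg2 s t r] at hz
        exact hz)
    calc (∫ t : ℝ, ∑ k, f k * pd (AV v p ν f) k (x₀ + s • e + t • f + r • ν))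
        = ∫ t : ℝ, ∑ k, f k * pd (AV v p ν f) k ((x₀ + s • e + r • ν) + t • f) := by
          simp_rw [harg2]
      _ = 0 := h0
  have hI1 : ∀ r : ℝ, (∫ q : ℝ × ℝ,
      ∑ k, e k * pd (AV v p ν e) k (x₀ + q.1 • e + q.2 • f + r • ν)) = 0 := by
    intro r
    have hint : Integrable (fun q : ℝ × ℝ =>
        ∑ k, e k * pd (AV v p ν e) k (x₀ + q.1 • e + q.2 • f + r • ν))
        ((volume : Measure ℝ).prod volume) := by
      rw [← Measure.volume_eq_prod]; exact hgint e r
    calc (∫ q : ℝ × ℝ, ∑ k, e k * pd (AV v p ν e) k (x₀ + q.1 • e + q.2 • f + r • ν))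
        = ∫ t : ℝ, ∫ s : ℝ,
            ∑ k, e k * pd (AV v p ν e) k (x₀ + s • e + t • f + r • ν) := by
          rw [Measure.volume_eq_prod]
          exact integral_prod_symm _ hint
      _ = ∫ t : ℝ, (0:ℝ) := by
          refine integral_congr_ae (Filter.Eventually.of_forall fun t => ?_)
          exact hinner1 t r
      _ = 0 := integral_zero _ _
  have hI2 : ∀ r : ℝ, (∫ q : ℝ × ℝ,
      ∑ k, f k * pd (AV v p ν f) k (x₀ + q.1 • e + q.2 • f + r • ν)) = 0 := by
    intro r
    have hint : Integrable (fun q : ℝ × ℝ =>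
        ∑ k, f k * pd (AV v p ν f) k (x₀ + q.1 • e + q.2 • f + r • ν))
        ((volume : Measure ℝ).prod volume) := by
      rw [← Measure.volume_eq_prod]; exact hgint f r
    calc (∫ q : ℝ × ℝ, ∑ k, f k * pd (AV v p ν f) k (x₀ + q.1 • e + q.2 • f + r • ν))
        = ∫ s : ℝ, ∫ t : ℝ,
            ∑ k, f k * pd (AV v p ν f) k (x₀ + s • e + t • f + r • ν) := by
          rw [Measure.volume_eq_prod]
          exact integral_prod _ hint
      _ = ∫ s : ℝ, (0:ℝ) := by
          refine integral_congr_ae (Filter.Eventually.of_forall fun s => ?_)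
          exact hinner2 s r
      _ = 0 := integral_zero _ _
  have hderiv0 : ∀ r : ℝ, (∫ q : ℝ × ℝ,
      ∑ k, ν k * pd (AV v p ν ν) k (x₀ + q.1 • e + q.2 • f + r • ν)) = 0 := by
    intro r
    have hpt : (fun q : ℝ × ℝ =>
        ∑ k, ν k * pd (AV v p ν ν) k (x₀ + q.1 • e + q.2 • f + r • ν))
        = fun q : ℝ × ℝ =>
            (-(∑ k, e k * pd (AV v p ν e) k (x₀ + q.1 • e + q.2 • f + r • ν)))
            - (∑ k, f k * pd (AV v p ν f) k (x₀ + q.1 • e + q.2 • f + r • ν)) := by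
      funext q
      have hd := div_frame hv hp euler hcomp heν hfν hν (x₀ + q.1 • e + q.2 • f + r • ν)
      linarith
    have hneg : Integrable (fun q : ℝ × ℝ =>
        -(∑ k, e k * pd (AV v p ν e) k (x₀ + q.1 • e + q.2 • f + r • ν)))
        (volume : Measure (ℝ × ℝ)) := (hgint e r).neg
    rw [hpt, integral_sub hneg (hgint f r), integral_neg, hI1 r, hI2 r]
    ring
  have hFd : ∀ r : ℝ, HasDerivAt
      (fun r : ℝ => ∫ q : ℝ × ℝ, AV v p ν ν (x₀ + q.1 • e + q.2 • f + r • ν)) 0 r := by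
    intro r
    have h := main r
    rwa [hderiv0 r] at h
  have hconst := is_const_of_deriv_eq_zero
    (f := fun r : ℝ => ∫ q : ℝ × ℝ, AV v p ν ν (x₀ + q.1 • e + q.2 • f + r • ν))
    (fun r => (hFd r).differentiableAt) (fun r => (hFd r).deriv) 0 (S + 1)
  have hFS : (∫ q : ℝ × ℝ, AV v p ν ν (x₀ + q.1 • e + q.2 • f + (S+1) • ν)) = 0 := by
    have hz : ∀ q : ℝ × ℝ, AV v p ν ν (x₀ + q.1 • e + q.2 • f + (S+1) • ν) = 0 := fun q =>
      hAV0 ν _ (hfar q.1 q.2 (S+1)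
        (Or.inr (Or.inr (by rw [abs_of_nonneg (by linarith)]; linarith))))
    simp only [hz, integral_zero]
  have hF0 : (∫ q : ℝ × ℝ, AV v p ν ν (x₀ + q.1 • e + q.2 • f + (0:ℝ) • ν)) = 0 :=
    hconst.trans hFS
  have hkey : ∀ q : ℝ × ℝ,
      ((∑ i, Q0 v p (x₀ + q.1 • e + q.2 • f) i i) -
        ∑ i, ∑ j, Q0 v p (x₀ + q.1 • e + q.2 • f) i j * ν i * ν j)
        = 2 * AV v p ν ν (x₀ + q.1 • e + q.2 • f + (0:ℝ) • ν) := by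
    intro q
    rw [show x₀ + q.1 • e + q.2 • f + (0:ℝ) • ν = x₀ + q.1 • e + q.2 • f by simp]
    exact integrand_eq hν _
  calc (∫ q : ℝ × ℝ,
      ((∑ i, Q0 v p (x₀ + q.1 • e + q.2 • f) i i) -
        ∑ i, ∑ j, Q0 v p (x₀ + q.1 • e + q.2 • f) i j * ν i * ν j))
      = ∫ q : ℝ × ℝ, 2 * AV v p ν ν (x₀ + q.1 • e + q.2 • f + (0:ℝ) • ν) := by
        refine integral_congr_ae (Filter.Eventually.of_forall fun q => ?_)
        exact hkey q
    _ = 2 * ∫ q : ℝ × ℝ, AV v p ν ν (x₀ + q.1 • e + q.2 • f + (0:ℝ) • ν) :=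
        integral_const_mul 2 _
    _ = 0 := by rw [hF0]; ring
end
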